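/- Let A, B ∈ ℝ^{n×m} with Aᵀ A = Bᵀ B, rank A = m < n, and Ā, B̄ as above (orthonormal, Āᵀ A = 0, B̄ᵀ B = 0). Then for every U ∈ O(n−m), the matrix Q = B A⁺ + B̄ U Āᵀ is orthogonal and satisfies Q A = B. -/

import Mathlib

/-!
Since `(AᵀA)⁻¹Aᵀ A = 1` and `Āᵀ A = 0`, we get `Q A = B`. Using `AᵀA = BᵀB`, `B̄ᵀB = 0` and the
orthogonality of `B̄` and `U`, `QᵀQ = P + ĀĀᵀ` with `P = A (AᵀA)⁻¹ Aᵀ`. Now `P` and `ĀĀᵀ` are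
idempotents annihilating each other, so `1 - P - ĀĀᵀ` is idempotent; its trace is
`n - m - (n - m) = 0`, and an idempotent of trace zero vanishes.
-/

open Matrix

namespace Matrix

variable {m n o R : Type*} [Fintype m] [Fintype n] [Fintype o]

section Field

variable [Field R]

theorem eq_zero_of_isIdempotentElem_of_trace_eq_zero [DecidableEq m] [CharZero R]
    {N : Matrix m m R} (hN : IsIdempotentElem N) (htr : N.trace = 0) : N = 0 := by
  rw [← trace_toLin'_eq] at htr
  simpa using LinearMap.IsIdempotentElem.eq_zero_of_trace_eq_zero (hN.map toLinAlgEquiv') htr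

theorem isUnit_of_rank_eq_card [DecidableEq n] {M : Matrix n n R}
    (h : M.rank = Fintype.card n) : IsUnit M := by
  rw [← mulVec_surjective_iff_isUnit, ← coe_mulVecLin, ← LinearMap.range_eq_top]
  apply Submodule.eq_top_of_finrank_eq
  rw [Module.finrank_fintype_fun_eq_card, ← h]
  rfl

theorem isUnit_transpose_mul_self_of_rank_eq [DecidableEq n] [LinearOrder R]
    [IsStrictOrderedRing R] {A : Matrix m n R} (h : A.rank = Fintype.card n) :
    IsUnit (Aᵀ * A) :=
  isUnit_of_rank_eq_card (by rw [rank_transpose_mul_self, h])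

end Field

variable [DecidableEq n]

section CommRing

variable [CommRing R]

noncomputable def colProj (A : Matrix m n R) : Matrix m m R := A * (Aᵀ * A)⁻¹ * Aᵀ

theorem transpose_inv_transpose_mul_self (A : Matrix m n R) : (Aᵀ * A)⁻¹ᵀ = (Aᵀ * A)⁻¹ := by
  rw [transpose_nonsing_inv, transpose_mul, transpose_transpose]

variable {A : Matrix m n R} (hA : IsUnit (Aᵀ * A))
include hA

theorem isIdempotentElem_colProj : IsIdempotentElem (colProj A) := by
  simp only [IsIdempotentElem, colProj, Matrix.mul_assoc]
  rw [← Matrix.mul_assoc Aᵀ A, nonsing_inv_mul_cancel_left _ _ ((isUnit_iff_isUnit_det _).mp hA)]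

theorem trace_colProj : (colProj A).trace = Fintype.card n := by
  rw [colProj, Matrix.mul_assoc, trace_mul_comm, Matrix.mul_assoc,
    nonsing_inv_mul _ ((isUnit_iff_isUnit_det _).mp hA), trace_one]

end CommRing

theorem colProj_add_mul_transpose_eq_one [DecidableEq m] [DecidableEq o] [Field R] [CharZero R]
    {A : Matrix m n R} {Abar : Matrix m o R} (hA : IsUnit (Aᵀ * A))
    (hAbar : Abarᵀ * Abar = 1) (hAo : Abarᵀ * A = 0)
    (hcard : Fintype.card n + Fintype.card o = Fintype.card m) :
    colProj A + Abar * Abarᵀ = 1 := by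
  have hE : IsIdempotentElem (Abar * Abarᵀ) := by
    rw [IsIdempotentElem, Matrix.mul_assoc, ← Matrix.mul_assoc Abarᵀ, hAbar, Matrix.one_mul]
  have hPE : colProj A * (Abar * Abarᵀ) = 0 := by
    rw [colProj, Matrix.mul_assoc, Matrix.mul_assoc, ← Matrix.mul_assoc Aᵀ,
      ← transpose_transpose (Aᵀ * Abar), transpose_mul, transpose_transpose, hAo]
    simp
  have hEP : Abar * Abarᵀ * colProj A = 0 := by
    rw [colProj, Matrix.mul_assoc, ← Matrix.mul_assoc Abarᵀ, ← Matrix.mul_assoc Abarᵀ, hAo]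
    simp
  have hidem := ((isIdempotentElem_colProj hA).add hE (by rw [hPE, hEP, add_zero])).one_sub
  refine (sub_eq_zero.mp (eq_zero_of_isIdempotentElem_of_trace_eq_zero hidem ?_)).symm
  rw [trace_sub, trace_add, trace_colProj hA, trace_mul_comm, hAbar, trace_one, trace_one,
    ← hcard, Nat.cast_add, sub_self]

section OrthogonalTransfer

variable [CommRing R]

/-- The paper's `Q = B A⁺ + B̄ U Āᵀ`. -/
noncomputable def orthogonalTransfer (A B : Matrix m n R) (Abar Bbar : Matrix m o R)
    (U : Matrix o o R) : Matrix m m R :=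
  B * ((Aᵀ * A)⁻¹ * Aᵀ) + Bbar * U * Abarᵀ

variable {A B : Matrix m n R} {Abar Bbar : Matrix m o R} {U : Matrix o o R}

theorem orthogonalTransfer_mul (hA : IsUnit (Aᵀ * A)) (hAo : Abarᵀ * A = 0) :
    orthogonalTransfer A B Abar Bbar U * A = B := by
  rw [orthogonalTransfer, Matrix.add_mul, Matrix.mul_assoc, Matrix.mul_assoc,
    nonsing_inv_mul _ ((isUnit_iff_isUnit_det _).mp hA), Matrix.mul_assoc, hAo]
  simp

theorem transpose_orthogonalTransfer_mul_self [DecidableEq o] (hAB : Aᵀ * A = Bᵀ * B)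
    (hA : IsUnit (Aᵀ * A)) (hBbar : Bbarᵀ * Bbar = 1) (hBo : Bbarᵀ * B = 0) (hU : Uᵀ * U = 1) :
    (orthogonalTransfer A B Abar Bbar U)ᵀ * orthogonalTransfer A B Abar Bbar U =
      colProj A + Abar * Abarᵀ := by
  have hBoT : Bᵀ * Bbar = 0 := by
    rw [← transpose_transpose (Bᵀ * Bbar), transpose_mul, transpose_transpose, hBo,
      transpose_zero]
  have hexp : (orthogonalTransfer A B Abar Bbar U)ᵀ * orthogonalTransfer A B Abar Bbar U
      = A * ((Aᵀ * A)⁻¹ * ((Bᵀ * B) * ((Aᵀ * A)⁻¹ * Aᵀ)))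
        + A * ((Aᵀ * A)⁻¹ * ((Bᵀ * Bbar) * (U * Abarᵀ)))
        + Abar * (Uᵀ * ((Bbarᵀ * B) * ((Aᵀ * A)⁻¹ * Aᵀ)))
        + Abar * ((Uᵀ * ((Bbarᵀ * Bbar) * U)) * Abarᵀ) := by
    simp only [orthogonalTransfer, transpose_add, transpose_mul, transpose_transpose,
      transpose_inv_transpose_mul_self]
    noncomm_ring [Matrix.mul_assoc]
  rw [hexp, ← hAB, hBoT, hBo, hBbar, Matrix.one_mul, hU,
    mul_nonsing_inv_cancel_left _ _ ((isUnit_iff_isUnit_det _).mp hA)]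
  simp [colProj, Matrix.mul_assoc]

end OrthogonalTransfer

end Matrix

theorem stmt_11_general {n m : ℕ} (A B : Matrix (Fin n) (Fin m) ℝ)
    (Abar Bbar : Matrix (Fin n) (Fin (n - m)) ℝ)
    (hAB : Aᵀ * A = Bᵀ * B) (hrank : A.rank = m)
    (hAbar : Abarᵀ * Abar = 1) (hBbar : Bbarᵀ * Bbar = 1)
    (hBo : Bbarᵀ * B = 0) (hAo : Abarᵀ * A = 0)
    (U : Matrix (Fin (n - m)) (Fin (n - m)) ℝ) (hU : Uᵀ * U = 1) :
    (B * ((Aᵀ * A)⁻¹ * Aᵀ) + Bbar * U * Abarᵀ)ᵀ *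
        (B * ((Aᵀ * A)⁻¹ * Aᵀ) + Bbar * U * Abarᵀ) = 1 ∧
      (B * ((Aᵀ * A)⁻¹ * Aᵀ) + Bbar * U * Abarᵀ) * A = B := by
  have hA : IsUnit (Aᵀ * A) := isUnit_transpose_mul_self_of_rank_eq (by simpa using hrank)
  have hcard : Fintype.card (Fin m) + Fintype.card (Fin (n - m)) = Fintype.card (Fin n) := by
    have hmn : m ≤ n := hrank ▸ A.rank_le_height
    simp only [Fintype.card_fin]
    omega
  exact ⟨(transpose_orthogonalTransfer_mul_self hAB hA hBbar hBo hU).trans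
      (colProj_add_mul_transpose_eq_one hA hAbar hAo hcard),
    orthogonalTransfer_mul hA hAo⟩

theorem stmt_11 {n m : ℕ} (A B : Matrix (Fin n) (Fin m) ℝ)
    (Abar Bbar : Matrix (Fin n) (Fin (n - m)) ℝ)
    (hAB : Aᵀ * A = Bᵀ * B) (hrank : A.rank = m) (hmn : m < n)
    (hAbar : Abarᵀ * Abar = 1) (hBbar : Bbarᵀ * Bbar = 1)
    (hBo : Bbarᵀ * B = 0) (hAo : Abarᵀ * A = 0)
    (U : Matrix (Fin (n - m)) (Fin (n - m)) ℝ) (hU : Uᵀ * U = 1) :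
    (B * ((Aᵀ * A)⁻¹ * Aᵀ) + Bbar * U * Abarᵀ)ᵀ *
        (B * ((Aᵀ * A)⁻¹ * Aᵀ) + Bbar * U * Abarᵀ) = 1 ∧
      (B * ((Aᵀ * A)⁻¹ * Aᵀ) + Bbar * U * Abarᵀ) * A = B :=
  stmt_11_general A B Abar Bbar hAB hrank hAbar hBbar hBo hAo U hU
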